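/- Let n ≥ 2. The set Der(L_n) of all (⊙,∨)-derivations on the n-element MV-chain L_n, partially ordered pointwise (d ⪯ d′ iff d(a) ≤ d′(a) for all a), is order-isomorphic to the set A(L_n) = {(x,y) ∈ L_n × L_n : y ≤ x} \ {(0,0)} equipped with the componentwise order; an order isomorphism is given by (x,y) ↦ (d_x)^y, where (d_x)^y(z) = y if z = n−1 and (d_x)^y(z) = x ⊙ z otherwise. In particular Der(L_n) is a lattice. -/

import Mathlib

/-- Łukasiewicz conjunction on the n-element MV-chain modeled on `Fin n`:
`a ⊙ b = (a + b) ∸ (n - 1)` (truncated subtraction). -/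
def codot {n : ℕ} (a b : Fin n) : Fin n :=
  ⟨a.1 + b.1 - (n - 1), by have ha := a.2; have hb := b.2; omega⟩

/-- `d` is an `(⊙,∨)`-derivation on the MV-chain `Fin n`:
`d (a ⊙ b) = (d a ⊙ b) ∨ (a ⊙ d b)` for all `a, b`. -/
def IsChainDer {n : ℕ} (d : Fin n → Fin n) : Prop :=
  ∀ a b : Fin n, d (codot a b) = max (codot (d a) b) (codot a (d b))

/-- The map (d_x)^y on Fin n: sends the top element n-1 to y and every
other z to x ⊙ z. -/
def dxy {n : ℕ} (hn : 2 ≤ n) (p : Fin n × Fin n) : Fin n → Fin n :=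
  fun z => if z = (⟨n - 1, by omega⟩ : Fin n) then p.2 else codot p.1 z

/-!
Multiplying by the coatom `c = n - 2` lowers an element by one: `a ⊙ c = a - 1` for `a ≥ 1`.
Hence the derivation identity at `(a, c)` reads `d (a - 1) = max (d a - 1) (x ⊙ (a - 1))` with
`x = d c + 1`, and downward induction from `c` gives `d z = x ⊙ z` for every `z` below the top.
So a derivation is determined by `x` and `y = d (n - 1)`; the same identity at `(n - 1, c)` gives
`y ≤ x`, and `d 0 = 0` gives `x ≤ n - 1`. Conversely each such `d = (d_x)^y` is a derivation. The
values at `n - 1` and at `c` recover `(y, x - 1)`, so the correspondence is an order isomorphism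
once `(0, 0)` (which gives the same map as `(1, 0)`) is removed. The admissible pairs are closed
under componentwise `max` and `min`, so the lattice structure transfers.
-/

variable {n : ℕ}

@[simp]
lemma val_codot (a b : Fin n) : (codot a b).val = a.val + b.val - (n - 1) := rfl

lemma val_dxy (hn : 2 ≤ n) (p : Fin n × Fin n) (z : Fin n) :
    (dxy hn p z).val = if z.val = n - 1 then p.2.val else p.1.val + z.val - (n - 1) := by
  by_cases hz : z.val = n - 1 <;> simp [dxy, hz, Fin.ext_iff]

lemma isChainDer_dxy (hn : 2 ≤ n) {p : Fin n × Fin n} (hp : p.2 ≤ p.1) :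
    IsChainDer (dxy hn p) := by
  intro a b
  have hx := p.1.isLt
  have ha := a.isLt
  have hb := b.isLt
  have hyx : p.2.val ≤ p.1.val := hp
  apply Fin.ext
  rw [Fin.coe_max, val_codot, val_codot, val_dxy, val_dxy, val_dxy]
  split_ifs <;> simp only [val_codot] at * <;> omega

lemma IsChainDer.val_apply_eq_max {d : Fin n → Fin n} (hd : IsChainDer d) {a b c : Fin n}
    (hc : c.val = a.val + b.val - (n - 1)) :
    (d c).val = max ((d a).val + b.val - (n - 1)) (a.val + (d b).val - (n - 1)) := by
  have hc : c = codot a b := Fin.ext hc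
  rw [hc, hd a b, Fin.coe_max, val_codot, val_codot]

lemma IsChainDer.val_apply_zero (hn : 2 ≤ n) {d : Fin n → Fin n} (hd : IsChainDer d) :
    (d ⟨0, by omega⟩).val = 0 := by
  have hd0 := (d ⟨0, by omega⟩).isLt
  have := hd.val_apply_eq_max (a := ⟨0, by omega⟩) (b := ⟨0, by omega⟩) (c := ⟨0, by omega⟩)
    (by simp)
  simp only at this
  omega

lemma IsChainDer.val_apply_of_lt (hn : 2 ≤ n) {d : Fin n → Fin n} (hd : IsChainDer d)
    (z : Fin n) (hz : z.val < n - 1) :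
    (d z).val = (d ⟨n - 2, by omega⟩).val + 1 + z.val - (n - 1) := by
  obtain ⟨k, hk⟩ : ∃ k, z.val + k = n - 2 := ⟨n - 2 - z.val, by omega⟩
  induction k generalizing z with
  | zero =>
    rw [show z = ⟨n - 2, by omega⟩ from Fin.ext (by omega)]
    simp only
    omega
  | succ k ih =>
    have hsucc := ih ⟨z.val + 1, by omega⟩ (by simp only; omega) (by simp only; omega)
    have := hd.val_apply_eq_max (a := ⟨z.val + 1, by omega⟩) (b := ⟨n - 2, by omega⟩) (c := z)
      (by simp only; omega)
    simp only at hsucc this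
    omega

lemma IsChainDer.exists_eq_dxy (hn : 2 ≤ n) {d : Fin n → Fin n} (hd : IsChainDer d) :
    ∃ p : Fin n × Fin n, p.2 ≤ p.1 ∧ 0 < p.1.val ∧ dxy hn p = d := by
  have hzero := hd.val_apply_zero hn
  have hbot := hd.val_apply_of_lt hn ⟨0, by omega⟩ (by simp only; omega)
  have htop := hd.val_apply_eq_max (a := ⟨n - 1, by omega⟩) (b := ⟨n - 2, by omega⟩)
    (c := ⟨n - 2, by omega⟩) (by simp only; omega)
  simp only at hbot htop
  refine ⟨(⟨(d ⟨n - 2, by omega⟩).val + 1, by omega⟩, d ⟨n - 1, by omega⟩),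
    Fin.le_def.mpr (by simp only; omega), by simp only; omega, ?_⟩
  funext z
  apply Fin.ext
  rw [val_dxy]
  split_ifs with hz
  · rw [show z = ⟨n - 1, by omega⟩ from Fin.ext hz]
  · exact (hd.val_apply_of_lt hn z (by omega)).symm

lemma monotone_dxy (hn : 2 ≤ n) : Monotone (dxy hn) := by
  rintro p q ⟨hx, hy⟩ z
  have hx : p.1.val ≤ q.1.val := hx
  have hy : p.2.val ≤ q.2.val := hy
  rw [Fin.le_def, val_dxy, val_dxy]
  split_ifs <;> omega

lemma le_of_dxy_le_dxy (hn : 2 ≤ n) {p q : Fin n × Fin n} (hq : 0 < q.1.val)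
    (h : dxy hn p ≤ dxy hn q) : p ≤ q := by
  have htop := Fin.le_def.mp (h ⟨n - 1, by omega⟩)
  have hcoatom := Fin.le_def.mp (h ⟨n - 2, by omega⟩)
  simp only [val_dxy, if_pos, if_neg (show n - 2 ≠ n - 1 by omega)] at htop hcoatom
  exact ⟨Fin.le_def.mpr (by omega), Fin.le_def.mpr htop⟩

/-- The paper's `A(L_n)`. -/
def admissiblePairs (n : ℕ) : Sublattice (Fin n × Fin n) where
  carrier := {p | p.2 ≤ p.1 ∧ ¬(p.1.1 = 0 ∧ p.2.1 = 0)}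
  supClosed' := by
    rintro p ⟨hp, hp0⟩ q ⟨hq, hq0⟩
    refine ⟨sup_le_sup hp hq, ?_⟩
    have hp : p.2.val ≤ p.1.val := hp
    have hq : q.2.val ≤ q.1.val := hq
    simp only [Prod.fst_sup, Prod.snd_sup, Fin.coe_max]
    omega
  infClosed' := by
    rintro p ⟨hp, hp0⟩ q ⟨hq, hq0⟩
    refine ⟨inf_le_inf hp hq, ?_⟩
    have hp : p.2.val ≤ p.1.val := hp
    have hq : q.2.val ≤ q.1.val := hq
    simp only [Prod.fst_inf, Prod.snd_inf, Fin.coe_min]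
    omega

lemma mem_admissiblePairs {p : Fin n × Fin n} :
    p ∈ admissiblePairs n ↔ p.2 ≤ p.1 ∧ 0 < p.1.val := by
  refine and_congr_right fun h => ?_
  have h : p.2.val ≤ p.1.val := h
  omega

noncomputable def dxyOrderIso (hn : 2 ≤ n) :
    admissiblePairs n ≃o {d : Fin n → Fin n // IsChainDer d} :=
  OrderIso.ofSurjective
    (OrderEmbedding.ofMapLEIff (fun p => ⟨dxy hn p, isChainDer_dxy hn p.2.1⟩) fun p q =>
      ⟨le_of_dxy_le_dxy hn (mem_admissiblePairs.mp q.2).2, fun h => monotone_dxy hn h⟩)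
    fun d => by
      obtain ⟨p, hp, hp0, hpd⟩ := d.2.exists_eq_dxy hn
      exact ⟨⟨p, mem_admissiblePairs.mpr ⟨hp, hp0⟩⟩, Subtype.ext hpd⟩

theorem stmt18 (n : ℕ) (hn : 2 ≤ n) :
    (∃ F : {p : Fin n × Fin n // p.2 ≤ p.1 ∧ ¬(p.1.1 = 0 ∧ p.2.1 = 0)} →
           {d : Fin n → Fin n // IsChainDer d},
      (∀ p, (F p).1 = dxy hn p.1) ∧ Function.Bijective F ∧
        ∀ p q, p ≤ q ↔ F p ≤ F q) ∧
      ∀ d d' : {d : Fin n → Fin n // IsChainDer d},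
        (∃ s, IsLUB {d, d'} s) ∧ (∃ s, IsGLB {d, d'} s) := by
  let e := dxyOrderIso hn
  refine ⟨⟨e, fun _ => rfl, e.bijective, fun p q => e.le_iff_le.symm⟩, fun d d' => ?_⟩
  obtain ⟨p, rfl⟩ := e.surjective d
  obtain ⟨q, rfl⟩ := e.surjective d'
  exact ⟨⟨e (p ⊔ q), by simpa only [Set.image_pair] using e.isLUB_image'.mpr isLUB_pair⟩,
    ⟨e (p ⊓ q), by simpa only [Set.image_pair] using e.isGLB_image'.mpr isGLB_pair⟩⟩
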